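/- arXiv:1309.2438 — 5 statements merged into one kernel-verified Lean document; each statement's English description precedes it below -/
import Mathlib

section
/- With V = W ⊕ U and π : U → W* linear, and α_π(w₁+u₁, w₂+u₂) = ⟨π(u₁), w₂⟩ − ⟨π(u₂), w₁⟩, the subspace W is a maximal isotropic subspace with respect to α_π if and only if π is injective. -/
/-!
Both terms of `α (x, y)` vanish when `π (proj_U x) = π (proj_U y) = 0`, so `K = ker (π ∘ proj_U)`
is an isotropic subspace containing `W`. Conversely `α (w, x) = -π (proj_U x) w` for `w ∈ W`, so
every isotropic subspace containing `W` lies in `K`. Hence `W` is maximal isotropic iff `K = W`,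
and since `proj_U` is onto with kernel `W`, this says `ker π = 0`.
-/

section MaximalIsotropic

variable {R V M : Type*} [Semiring R] [AddCommMonoid V] [Module R V] [Zero M]

def IsIsotropic (α : V → V → M) (S : Submodule R V) : Prop :=
  ∀ x ∈ S, ∀ y ∈ S, α x y = 0

def IsMaximalIsotropic (α : V → V → M) (W : Submodule R V) : Prop :=
  IsIsotropic α W ∧ ∀ W' : Submodule R V, IsIsotropic α W' → W ≤ W' → W' = W

theorem IsIsotropic.mono {α : V → V → M} {S T : Submodule R V} (hT : IsIsotropic α T)
    (hST : S ≤ T) : IsIsotropic α S :=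
  fun x hx y hy => hT x (hST hx) y (hST hy)

theorem isMaximalIsotropic_iff_eq_of_isGreatest {α : V → V → M} {W K : Submodule R V}
    (hK : IsIsotropic α K) (hWK : W ≤ K)
    (hgreatest : ∀ W' : Submodule R V, IsIsotropic α W' → W ≤ W' → W' ≤ K) :
    IsMaximalIsotropic α W ↔ K = W :=
  ⟨fun ⟨_, hmax⟩ => hmax K hK hWK,
    fun hKW => ⟨hK.mono hWK, fun W' hW' hWW' => le_antisymm (hKW ▸ hgreatest W' hW' hWW') hWW'⟩⟩

end MaximalIsotropic

noncomputable section

namespace IsCompl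

variable {R V : Type*} [CommRing R] [AddCommGroup V] [Module R V] {W U : Submodule R V}
  (h : IsCompl W U) (π : U →ₗ[R] W →ₗ[R] R)

/-- The form `α_π (w₁ + u₁, w₂ + u₂) = π u₁ w₂ - π u₂ w₁`. -/
def pairingForm (v₁ v₂ : V) : R :=
  π (U.projectionOnto W h.symm v₁) (W.projectionOnto U h v₂) -
    π (U.projectionOnto W h.symm v₂) (W.projectionOnto U h v₁)

def pairingKer : Submodule R V :=
  LinearMap.ker (π ∘ₗ U.projectionOnto W h.symm)

theorem pairingForm_of_mem_left {w : V} (hw : w ∈ W) (v : V) :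
    h.pairingForm π w v = -π (U.projectionOnto W h.symm v) ⟨w, hw⟩ := by
  simp [pairingForm, Submodule.projectionOnto_apply_of_mem_right h.symm hw,
    Submodule.projectionOnto_apply_of_mem_left h hw]

theorem isIsotropic_pairingKer : IsIsotropic (h.pairingForm π) (h.pairingKer π) := by
  intro x hx y hy
  rw [pairingKer, LinearMap.mem_ker, LinearMap.comp_apply] at hx hy
  simp [pairingForm, hx, hy]

theorem le_pairingKer : W ≤ h.pairingKer π := fun w hw => by
  simp [pairingKer, Submodule.projectionOnto_apply_of_mem_right h.symm hw]

theorem le_pairingKer_of_isIsotropic {W' : Submodule R V}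
    (hW' : IsIsotropic (h.pairingForm π) W') (hWW' : W ≤ W') : W' ≤ h.pairingKer π := by
  intro x hx
  refine LinearMap.ext fun ⟨w, hw⟩ => ?_
  simpa [pairingForm_of_mem_left h π hw] using hW' w (hWW' hw) x hx

theorem pairingKer_eq_iff_injective : h.pairingKer π = W ↔ Function.Injective π := by
  have hsurj := Submodule.projectionOnto_surjective h.symm
  rw [pairingKer, LinearMap.ker_comp, ← LinearMap.ker_eq_bot,
    ← (Submodule.comap_injective_of_surjective hsurj).eq_iff]
  exact Eq.congr_right (Submodule.ker_projectionOnto h.symm).symm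

end IsCompl

end

theorem maximal_isotropic_iff_injective_general
    {F V : Type*} [Field F] [AddCommGroup V] [Module F V]
    (W U : Submodule F V) (h : IsCompl W U) (π : U →ₗ[F] (W →ₗ[F] F)) :
    let projW := W.linearProjOfIsCompl U h
    let projU := U.linearProjOfIsCompl W h.symm
    let α : V → V → F := fun v₁ v₂ => π (projU v₁) (projW v₂) - π (projU v₂) (projW v₁)
    let Isotropic : Submodule F V → Prop := fun W' => ∀ x ∈ W', ∀ y ∈ W', α x y = 0
    (Isotropic W ∧ ∀ W' : Submodule F V, Isotropic W' → W ≤ W' → W' = W) ↔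
      Function.Injective π :=
  (isMaximalIsotropic_iff_eq_of_isGreatest (h.isIsotropic_pairingKer π) (h.le_pairingKer π)
    fun _ => h.le_pairingKer_of_isIsotropic π).trans (h.pairingKer_eq_iff_injective π)

/-- With `V = W ⊕ U` and `π : U → W*` linear, `W` is a maximal isotropic
subspace with respect to `α_π` if and only if `π` is injective. -/
theorem maximal_isotropic_iff_injective
    {F V : Type*} [Field F] [AddCommGroup V] [Module F V] [FiniteDimensional F V]
    (W U : Submodule F V) (h : IsCompl W U) (π : U →ₗ[F] (W →ₗ[F] F)) :
    let projW := W.linearProjOfIsCompl U h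
    let projU := U.linearProjOfIsCompl W h.symm
    let α : V → V → F := fun v₁ v₂ => π (projU v₁) (projW v₂) - π (projU v₂) (projW v₁)
    let Isotropic : Submodule F V → Prop := fun W' => ∀ x ∈ W', ∀ y ∈ W', α x y = 0
    (Isotropic W ∧ ∀ W' : Submodule F V, Isotropic W' → W ≤ W' → W' = W) ↔
      Function.Injective π :=
  maximal_isotropic_iff_injective_general W U h π
end

section
/- Let G be a finite group, M a trivial G-module, c ∈ Z²(G,M), and α_c(g,h) = c(h,g) − c(hgh⁻¹, h). Then for every g ∈ G, the map h ↦ α_c(g,h) restricted to the centralizer C_G(g) is a group homomorphism from C_G(g) to M. -/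
/-! On the centralizer of `g` the conjugation in `α_c` is trivial, so `α_c(g, h) = c(h, g) - c(g, h)`,
and additivity in `h` is a signed sum of three instances of the cocycle identity. -/

theorem cocycle_sub_swap_mul_of_commute {G M : Type*} [Group G] [AddCommGroup M]
    {c : G → G → M} (hc : ∀ g h k : G, c g h + c (g * h) k = c h k + c g (h * k))
    {g h₁ h₂ : G} (hg₁ : Commute g h₁) (hg₂ : Commute g h₂) :
    c (h₁ * h₂) g - c g (h₁ * h₂) = (c h₁ g - c g h₁) + (c h₂ g - c g h₂) := by
  have e₁ := hc g h₁ h₂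
  have e₂ := hc h₁ h₂ g
  have e₃ := hc h₁ g h₂
  rw [hg₂.eq, ← hg₁.eq] at e₃
  linear_combination (norm := abel) e₂ + e₁ - e₃

theorem associated_form_hom_on_centralizer_general
    {G M : Type*} [Group G] [AddCommGroup M]
    (c : G → G → M)
    (hc : ∀ g h k : G, c g h + c (g * h) k = c h k + c g (h * k)) :
    let α : G → G → M := fun g h => c h g - c (h * g * h⁻¹) h
    ∀ g h₁ h₂ : G, g * h₁ = h₁ * g → g * h₂ = h₂ * g →
      α g (h₁ * h₂) = α g h₁ + α g h₂ := by
  intro α g h₁ h₂ (hg₁ : Commute g h₁) (hg₂ : Commute g h₂)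
  have hg₁₂ : Commute g (h₁ * h₂) := hg₁.mul_right hg₂
  simp only [α, hg₁.symm.mul_inv_cancel, hg₂.symm.mul_inv_cancel, hg₁₂.symm.mul_inv_cancel]
  exact cocycle_sub_swap_mul_of_commute hc hg₁ hg₂

/-- For a 2-cocycle `c ∈ Z²(G,M)` and `α_c(g,h) = c(h,g) − c(hgh⁻¹,h)`,
the map `h ↦ α_c(g,h)` restricted to the centralizer `C_G(g)` is a group
homomorphism to `M`. -/
theorem associated_form_hom_on_centralizer
    {G M : Type*} [Group G] [Fintype G] [AddCommGroup M]
    (c : G → G → M)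
    (hc : ∀ g h k : G, c g h + c (g * h) k = c h k + c g (h * k)) :
    let α : G → G → M := fun g h => c h g - c (h * g * h⁻¹) h
    ∀ g h₁ h₂ : G, g * h₁ = h₁ * g → g * h₂ = h₂ * g →
      α g (h₁ * h₂) = α g h₁ + α g h₂ :=
  associated_form_hom_on_centralizer_general c hc
end

section
/- Let G = A ⋊ Q be a semidirect product of finite groups with A abelian, and let π ∈ Z¹(Q, Â) be a 1-cocycle, where Â = Hom(A, ℂ*) carries the Q-action ⟨q(χ), a⟩ = ⟨χ, q⁻¹(a)⟩. Define c_π : G × G → ℂ* by c_π(a₁q₁, a₂q₂) = ⟨π(q₁⁻¹), a₂⟩. Then c_π is a 2-cocycle on G with values in the trivial G-module ℂ*. -/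
theorem cocycle_apply_mul_inv {A Q M : Type*} [Monoid A] [Group Q] [CommMonoid M]
    (φ : Q →* MulAut A) (π : Q → (A →* M))
    (hπ : ∀ q₁ q₂ : Q, ∀ a : A, π (q₁ * q₂) a = π q₁ a * π q₂ ((φ q₁)⁻¹ a))
    (q₁ q₂ : Q) (a : A) :
    π (q₁ * q₂)⁻¹ a = π q₂⁻¹ a * π q₁⁻¹ (φ q₂ a) := by
  rw [mul_inv_rev, hπ, map_inv, inv_inv]

theorem eg_cocycle_general
    {A Q : Type*} [CommGroup A] [Group Q]
    (φ : Q →* MulAut A) (π : Q → (A →* ℂˣ))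
    (hπ : ∀ q₁ q₂ : Q, ∀ a : A, π (q₁ * q₂) a = π q₁ a * π q₂ ((φ q₁)⁻¹ a)) :
    let c : SemidirectProduct A Q φ → SemidirectProduct A Q φ → ℂˣ :=
      fun g₁ g₂ => π g₁.right⁻¹ g₂.left
    ∀ g h k : SemidirectProduct A Q φ,
      c g h * c (g * h) k = c h k * c g (h * k) := by
  intro c g h k
  show π g.right⁻¹ h.left * π (g.right * h.right)⁻¹ k.left
      = π h.right⁻¹ k.left * π g.right⁻¹ (h.left * φ h.right k.left)
  rw [cocycle_apply_mul_inv φ π hπ, map_mul, mul_left_comm]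

/-- Let `G = A ⋊ Q` with `A` abelian, and let `π ∈ Z¹(Q, Â)` where
`Â = Hom(A, ℂ*)` with the action `⟨q(χ), a⟩ = ⟨χ, q⁻¹(a)⟩`. Then
`c_π(a₁q₁, a₂q₂) = ⟨π(q₁⁻¹), a₂⟩` is a 2-cocycle on `G` with values in the trivial
`G`-module `ℂ*`. -/
theorem eg_cocycle
    {A Q : Type*} [CommGroup A] [Group Q] [Fintype A] [Fintype Q]
    (φ : Q →* MulAut A) (π : Q → (A →* ℂˣ))
    (hπ : ∀ q₁ q₂ : Q, ∀ a : A, π (q₁ * q₂) a = π q₁ a * π q₂ ((φ q₁)⁻¹ a)) :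
    let c : SemidirectProduct A Q φ → SemidirectProduct A Q φ → ℂˣ :=
      fun g₁ g₂ => π g₁.right⁻¹ g₂.left
    ∀ g h k : SemidirectProduct A Q φ,
      c g h * c (g * h) k = c h k * c g (h * k) :=
  eg_cocycle_general φ π hπ
end

section
/- Let [c] ∈ H²(G, ℂ*) be a non-degenerate class on a finite group G, and let A ◁ G be a normal subgroup with res^G_A [c] = 0. Then A is abelian. -/
/-!
The twisted group algebra `ℂᶜG` carries the trace `x ↦ x 1`, and non-degeneracy of `c` says
exactly that its centre is `ℂ`. A trivialisation `f` of `c` on `A` makes `p ↦ f(p)⁻¹ u_p` a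
homomorphism `v` from `A`, so `e = ∑ₚ v p` is fixed by left multiplication by `v(A)`. As `A` is
normal, `u_p u_g ∈ ℂ u_g u_{g⁻¹pg}`, so every conjugate `u_g e u_g⁻¹` is a common eigenvector of
left multiplication by `v(A)`, on which `v(ab)` and `v(ba)` therefore agree. The sum `z` of these
conjugates is central with trace `|G| e(1) ≠ 0`, hence a nonzero scalar, and `v(ab) z = v(ba) z`
gives `v(ab) = v(ba)`, i.e. `ab = ba`.
-/

open Finset

structure TwoCocycle (G : Type*) [Group G] where
  toFun : G → G → ℂˣ
  cocycle : ∀ g h k, toFun g h * toFun (g * h) k = toFun h k * toFun g (h * k)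

namespace TwoCocycle

variable {G : Type*} [Group G]

instance : CoeFun (TwoCocycle G) (fun _ => G → G → ℂˣ) := ⟨toFun⟩

variable (c : TwoCocycle G)

lemma apply_one_left (g : G) : c 1 g = c 1 1 := by
  simpa using (c.cocycle 1 1 g).symm

lemma apply_one_right (g : G) : c g 1 = c 1 1 := by
  simpa using c.cocycle g 1 1

lemma apply_inv_comm (g : G) : c g g⁻¹ = c g⁻¹ g := by
  simpa [apply_one_left, apply_one_right] using c.cocycle g g⁻¹ g

def IsNondegenerate : Prop := ∀ x : G, x ≠ 1 → ∃ g : G, x * g = g * x ∧ c x g ≠ c g x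

end TwoCocycle

section

variable {K R : Type*} [CommSemiring K] [Semiring R] [Algebra K R]

lemma MonoidHom.mul_sum_eq_sum {A : Type*} [Group A] [Fintype A] (v : A →* R) (q : A) :
    v q * ∑ p, v p = ∑ p, v p := by
  rw [mul_sum]
  exact Fintype.sum_equiv (Equiv.mulLeft q) _ _ fun p => (map_mul v q p).symm

lemma MonoidHom.map_mul_mul_eq_of_mem_span_singleton {A : Type*} [Monoid A] (v : A →* R)
    {x : R} (hx : ∀ a, v a * x ∈ K ∙ x) (a b : A) : v (a * b) * x = v (b * a) * x := by
  obtain ⟨α, hα⟩ := Submodule.mem_span_singleton.1 (hx a)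
  obtain ⟨β, hβ⟩ := Submodule.mem_span_singleton.1 (hx b)
  simp only [map_mul, mul_assoc, ← hα, ← hβ, mul_smul_comm, smul_smul, mul_comm α β]

lemma mul_conj_mem_span_singleton (u : Rˣ) {x y e : R} (hxy : x * u ∈ K ∙ (↑u * y))
    (he : y * e = e) : x * (u * e * ↑u⁻¹) ∈ K ∙ (↑u * e * ↑u⁻¹) := by
  obtain ⟨a, ha⟩ := Submodule.mem_span_singleton.1 hxy
  refine Submodule.mem_span_singleton.2 ⟨a, ?_⟩
  rw [← mul_assoc, ← mul_assoc, ← ha, smul_mul_assoc, smul_mul_assoc, mul_assoc (u : R) y e, he]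

end

section

variable {G : Type*} [Group G]

/-- A function `x : G → ℂ` stands for `∑ g, x g • u_g`, with `u_g * u_h = c g h • u_(g * h)`. -/
def TwistedGroupAlgebra (_c : TwoCocycle G) : Type _ := G → ℂ

namespace TwistedGroupAlgebra

variable {c : TwoCocycle G}

instance : AddCommGroup (TwistedGroupAlgebra c) := inferInstanceAs (AddCommGroup (G → ℂ))

instance : Module ℂ (TwistedGroupAlgebra c) := inferInstanceAs (Module ℂ (G → ℂ))

@[ext] lemma ext {x y : TwistedGroupAlgebra c} (h : ∀ k, x k = y k) : x = y := funext h

@[simp] lemma smul_apply (a : ℂ) (x : TwistedGroupAlgebra c) (k : G) : (a • x) k = a * x k := rfl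

@[simp] lemma add_apply (x y : TwistedGroupAlgebra c) (k : G) : (x + y) k = x k + y k := rfl

@[simp] lemma zero_apply (k : G) : (0 : TwistedGroupAlgebra c) k = 0 := rfl

lemma sum_apply {ι : Type*} (s : Finset ι) (x : ι → TwistedGroupAlgebra c) (k : G) :
    (∑ i ∈ s, x i) k = ∑ i ∈ s, x i k :=
  Finset.sum_apply (M := fun _ => ℂ) k s x

section DecidableEq

variable [DecidableEq G]

variable (c) in
def single (g : G) : TwistedGroupAlgebra c := Pi.single g 1

lemma single_apply (g k : G) : single c g k = if k = g then 1 else 0 :=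
  Pi.single_apply g 1 k

noncomputable instance : One (TwistedGroupAlgebra c) where
  one := (c 1 1 : ℂ)⁻¹ • single c 1

lemma one_eq : (1 : TwistedGroupAlgebra c) = (c 1 1 : ℂ)⁻¹ • single c 1 := rfl

end DecidableEq

variable [Fintype G]

instance : Mul (TwistedGroupAlgebra c) where
  mul x y k := ∑ g, x g * y (g⁻¹ * k) * c g (g⁻¹ * k)

lemma mul_apply (x y : TwistedGroupAlgebra c) (k : G) :
    (x * y) k = ∑ g, x g * y (g⁻¹ * k) * c g (g⁻¹ * k) := rfl

lemma smul_mul' (a : ℂ) (x y : TwistedGroupAlgebra c) : a • x * y = a • (x * y) := by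
  ext k
  simp only [mul_apply, smul_apply, mul_sum]
  exact sum_congr rfl fun g _ => by ring

lemma mul_smul' (a : ℂ) (x y : TwistedGroupAlgebra c) : x * a • y = a • (x * y) := by
  ext k
  simp only [mul_apply, smul_apply, mul_sum]
  exact sum_congr rfl fun g _ => by ring

lemma mul_assoc' (x y z : TwistedGroupAlgebra c) : x * y * z = x * (y * z) := by
  ext k
  simp only [mul_apply, sum_mul, mul_sum]
  rw [sum_comm]
  refine sum_congr rfl fun g _ => ?_
  rw [← Equiv.sum_comp (Equiv.mulLeft g)]
  refine sum_congr rfl fun h _ => ?_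
  have hc := congrArg Units.val (c.cocycle g h (h⁻¹ * (g⁻¹ * k)))
  simp only [Units.val_mul, mul_inv_cancel_left] at hc
  simp only [Equiv.coe_mulLeft, inv_mul_cancel_left, mul_inv_rev, mul_assoc]
  linear_combination (x g * y h * z (h⁻¹ * (g⁻¹ * k))) * hc

lemma mul_apply_one_comm (x y : TwistedGroupAlgebra c) : (x * y) 1 = (y * x) 1 := by
  rw [mul_apply, mul_apply, ← Equiv.sum_comp (Equiv.inv G)]
  refine sum_congr rfl fun g _ => ?_
  simp only [Equiv.inv_apply, inv_inv, mul_one, c.apply_inv_comm]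
  ring

variable [DecidableEq G]

lemma single_mul_apply (g : G) (y : TwistedGroupAlgebra c) (k : G) :
    (single c g * y) k = c g (g⁻¹ * k) * y (g⁻¹ * k) := by
  rw [mul_apply, sum_eq_single g (fun h _ hg => by simp [single_apply, hg]) (by simp)]
  simp [single_apply, mul_comm]

lemma mul_single_apply (x : TwistedGroupAlgebra c) (g k : G) :
    (x * single c g) k = c (k * g⁻¹) g * x (k * g⁻¹) := by
  rw [mul_apply, sum_eq_single (k * g⁻¹) (fun h _ hk => ?_) (by simp)]
  · simp [single_apply, mul_comm]
  · have : h⁻¹ * k ≠ g := fun h' => hk (by rw [← h']; group)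
    simp [single_apply, this]

lemma one_mul' (x : TwistedGroupAlgebra c) : 1 * x = x := by
  ext k
  rw [one_eq, smul_mul', smul_apply, single_mul_apply, inv_one, one_mul, c.apply_one_left k]
  simp

lemma mul_one' (x : TwistedGroupAlgebra c) : x * 1 = x := by
  ext k
  rw [one_eq, mul_smul', smul_apply, mul_single_apply, inv_one, mul_one, c.apply_one_right k]
  simp

noncomputable instance : Ring (TwistedGroupAlgebra c) where
  __ := (inferInstance : AddCommGroup (TwistedGroupAlgebra c))
  mul_assoc := mul_assoc'
  one_mul := one_mul'
  mul_one := mul_one'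
  left_distrib x y z := by ext k; simp [mul_apply, mul_add, add_mul, sum_add_distrib]
  right_distrib x y z := by ext k; simp [mul_apply, add_mul, sum_add_distrib]
  zero_mul x := by ext k; simp [mul_apply]
  mul_zero x := by ext k; simp [mul_apply]

noncomputable instance : Algebra ℂ (TwistedGroupAlgebra c) := Algebra.ofModule smul_mul' mul_smul'

lemma single_mul_single (g h : G) :
    single c g * single c h = (c g h : ℂ) • single c (g * h) := by
  ext k
  rw [single_mul_apply, smul_apply, single_apply, single_apply]
  by_cases hk : k = g * h
  · simp [hk]
  · have : g⁻¹ * k ≠ h := fun h' => hk (by rw [← h']; group)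
    simp [hk, this]

variable (c) in
noncomputable def unit (g : G) : (TwistedGroupAlgebra c)ˣ where
  val := single c g
  inv := ((c g g⁻¹ : ℂ) * c 1 1)⁻¹ • single c g⁻¹
  val_inv := by
    rw [mul_smul_comm, single_mul_single, mul_inv_cancel, smul_smul, one_eq]
    congr 1
    field_simp
  inv_val := by
    rw [smul_mul_assoc, single_mul_single, inv_mul_cancel, smul_smul, one_eq,
      ← c.apply_inv_comm]
    congr 1
    field_simp

@[simp] lemma coe_unit (g : G) : (unit c g : TwistedGroupAlgebra c) = single c g := rfl

lemma inv_unit_mul_single (h g : G) :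
    ↑(unit c (h * g))⁻¹ * single c h = (c h g : ℂ) • ↑(unit c g)⁻¹ := by
  rw [Units.inv_mul_eq_iff_eq_mul, mul_smul_comm, ← smul_mul_assoc, Units.eq_mul_inv_iff_mul_eq]
  exact single_mul_single h g

lemma single_mul_conj (h g : G) (x : TwistedGroupAlgebra c) :
    single c h * (unit c g * x * ↑(unit c g)⁻¹)
      = unit c (h * g) * x * ↑(unit c (h * g))⁻¹ * single c h := by
  rw [mul_assoc _ _ (single c h), inv_unit_mul_single, mul_smul_comm, ← smul_mul_assoc,
    ← smul_mul_assoc, coe_unit, coe_unit, ← single_mul_single]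
  simp only [mul_assoc]

lemma commute_single_sum_conj (x : TwistedGroupAlgebra c) (h : G) :
    Commute (single c h) (∑ g, unit c g * x * ↑(unit c g)⁻¹) := by
  change _ * _ = _ * _
  simp only [mul_sum, sum_mul, single_mul_conj]
  exact Fintype.sum_equiv (Equiv.mulLeft h) _ _ fun g => rfl

lemma conj_apply_one (u : (TwistedGroupAlgebra c)ˣ) (x : TwistedGroupAlgebra c) :
    (↑u * x * ↑u⁻¹) 1 = x 1 := by
  rw [mul_apply_one_comm, ← mul_assoc, Units.inv_mul, one_mul]

lemma sum_conj_apply_one (x : TwistedGroupAlgebra c) :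
    (∑ g, unit c g * x * ↑(unit c g)⁻¹) 1 = Fintype.card G * x 1 := by
  simp only [sum_apply, conj_apply_one, sum_const, card_univ, nsmul_eq_mul]

section Center

variable (hnd : c.IsNondegenerate) {z : TwistedGroupAlgebra c}
  (hz : ∀ g, Commute (single c g) z)
include hnd hz

lemma apply_eq_zero_of_forall_commute {x : G} (hx : x ≠ 1) : z x = 0 := by
  obtain ⟨g, hxg, hne⟩ := hnd x hx
  have key := congrArg (· (x * g)) (hz g).eq
  simp only [mul_single_apply, mul_inv_cancel_right] at key
  rw [hxg, single_mul_apply, inv_mul_cancel_left] at key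
  by_contra h0
  exact hne (Units.ext (mul_right_cancel₀ h0 key).symm)

lemma eq_smul_one_of_forall_commute : z = (z 1 * c 1 1) • 1 := by
  ext x
  rw [smul_apply, one_eq, smul_apply, single_apply]
  by_cases hx : x = 1
  · simp [hx]
  · simp [hx, apply_eq_zero_of_forall_commute hnd hz hx]

lemma isUnit_of_forall_commute (h1 : z 1 ≠ 0) : IsUnit z := by
  rw [eq_smul_one_of_forall_commute hnd hz, ← Algebra.algebraMap_eq_smul_one]
  exact (isUnit_iff_ne_zero.2 (mul_ne_zero h1 (c 1 1).ne_zero)).map _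

end Center

section Coboundary

variable {A : Subgroup G} {f : A → ℂˣ} (hf : ∀ a b : A, c a b = f a * f b * (f (a * b))⁻¹)

variable (c A f) in
noncomputable def coboundaryHom : A →* TwistedGroupAlgebra c where
  toFun p := (f p : ℂ)⁻¹ • single c p
  map_one' := by
    have h1 : c 1 1 = f 1 := by simpa using hf 1 1
    rw [one_eq, h1, OneMemClass.coe_one]
  map_mul' p q := by
    rw [smul_mul_assoc, mul_smul_comm, single_mul_single, smul_smul, smul_smul, hf]
    push_cast
    congr 1
    field_simp

lemma coboundaryHom_apply (p : A) : coboundaryHom c A f hf p = (f p : ℂ)⁻¹ • single c p := rfl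

lemma coboundaryHom_injective : Function.Injective (coboundaryHom c A f hf) := by
  intro p q hpq
  have key := congrArg (· (p : G)) hpq
  by_contra hne
  have : (p : G) ≠ q := fun h => hne (Subtype.ext h)
  simp [coboundaryHom_apply, single_apply, this] at key

lemma coboundaryHom_mul_single_mem_span (p : A) (g : G) (hp : g⁻¹ * p * g ∈ A) :
    coboundaryHom c A f hf p * single c g
      ∈ ℂ ∙ (single c g * coboundaryHom c A f hf ⟨g⁻¹ * p * g, hp⟩) := by
  refine Submodule.mem_span_singleton.2
    ⟨(f p : ℂ)⁻¹ * c p g * f ⟨_, hp⟩ * (c g (g⁻¹ * p * g) : ℂ)⁻¹, ?_⟩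
  rw [coboundaryHom_apply, coboundaryHom_apply, mul_smul_comm, smul_mul_assoc, single_mul_single,
    single_mul_single, smul_smul, smul_smul, smul_smul]
  have : g * (g⁻¹ * p * g) = p * g := by group
  rw [this]
  congr 1
  field_simp

lemma sum_coboundaryHom_apply_one [Fintype A] :
    (∑ p, coboundaryHom c A f hf p) 1 = (f 1 : ℂ)⁻¹ := by
  rw [sum_apply, sum_eq_single 1 (fun p _ hp => ?_) (by simp)]
  · simp [coboundaryHom_apply, single_apply]
  · have : (1 : G) ≠ p := fun h => hp (Subtype.ext h.symm)
    simp [coboundaryHom_apply, single_apply, this]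

end Coboundary

end TwistedGroupAlgebra

end

open TwistedGroupAlgebra

/-- If `[c] ∈ H²(G, ℂ*)` is non-degenerate (for every `x ≠ e` there is
`g ∈ C_G(x)` with `c(x,g) ≠ c(g,x)`) and `A ◁ G` is a normal subgroup on which the
restriction of `[c]` is trivial (i.e. a coboundary), then `A` is abelian. -/
theorem isotropic_normal_subgroup_abelian
    {G : Type*} [Group G] [Fintype G]
    (c : G → G → ℂˣ)
    (hc : ∀ g h k : G, c g h * c (g * h) k = c h k * c g (h * k))
    (hnd : ∀ x : G, x ≠ 1 → ∃ g : G, x * g = g * x ∧ c x g ≠ c g x)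
    (A : Subgroup G) [A.Normal]
    (hres : ∃ f : A → ℂˣ, ∀ a b : A, c (a : G) (b : G) = f a * f b * (f (a * b))⁻¹) :
    ∀ a b : A, a * b = b * a := by
  classical
  obtain ⟨f, hf⟩ := hres
  let c' : TwoCocycle G := ⟨c, hc⟩
  let v := coboundaryHom c' A f hf
  let e := ∑ p, v p
  let E (g : G) := ↑(unit c' g) * e * ↑(unit c' g)⁻¹
  have hE (g : G) (p : A) : v p * E g ∈ ℂ ∙ E g :=
    mul_conj_mem_span_singleton _
      (coboundaryHom_mul_single_mem_span hf p g (by simpa using ‹A.Normal›.conj_mem p p.2 g⁻¹))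
      (v.mul_sum_eq_sum _)
  have hz : IsUnit (∑ g, E g) := by
    refine isUnit_of_forall_commute (c := c') hnd (commute_single_sum_conj e) ?_
    rw [sum_conj_apply_one]
    simp [e, v, sum_coboundaryHom_apply_one]
  intro a b
  refine coboundaryHom_injective hf (hz.mul_left_inj.1 ?_)
  simp only [mul_sum]
  exact sum_congr rfl fun g _ => v.map_mul_mul_eq_of_mem_span_singleton (hE g) a b
end

section
/- Let p ≥ 5 be prime, A = (𝔽_p)^5, T the nilpotent single Jordan block on A (T(x₁) = 0, T(x_i) = x_{i−1}), R = 1 + T and S = 1 + T². Then for every pair (l₁, l₂) ≠ (0,0) in (ℤ/p)², the 𝔽_p-linear operator R^{l₁} S^{l₂} − I on A has rank at least 3. -/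
/-!
Both `R = 1 + T` and `S = 1 + T²` are polynomials in the nilpotent `T`, so with `a`, `b` the
representatives of `l₁`, `l₂` we get `R^a S^b - 1 = f(T)` for `f = (1 + X)^a (1 + X²)^b - 1`.
Writing `f = X^d u` with `u(0) ≠ 0`, the operator `u(T)` is invertible, hence `f(T)` has the
same image as `T^d`, of rank `5 - d`. The coefficient of `X` in `f` is `a`, and for `a = 0`
the coefficient of `X²` is `b`; so `d ≤ 2` as soon as `(a, b) ≠ (0, 0)` in `𝔽_p`.
-/

open Polynomial

section LeftShift

variable {K : Type*} [CommRing K] {n : ℕ}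

variable (K n) in
def leftShift : Module.End K (Fin n → K) :=
  Matrix.toLin' (Matrix.of fun i j : Fin n => if (j : ℕ) = (i : ℕ) + 1 then 1 else 0)

theorem leftShift_apply (v : Fin n → K) (i : Fin n) :
    leftShift K n v i = if h : (i : ℕ) + 1 < n then v ⟨i + 1, h⟩ else 0 := by
  simp only [leftShift, Matrix.toLin'_apply, Matrix.mulVec, dotProduct, Matrix.of_apply, ite_mul,
    one_mul, zero_mul]
  split_ifs with h
  · exact (Finset.sum_eq_single ⟨i + 1, h⟩
      (fun j _ hj => if_neg (by simpa [Fin.ext_iff] using hj)) (by simp)).trans (if_pos rfl)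
  · exact Finset.sum_eq_zero fun j _ => if_neg fun (hj : (j : ℕ) = i + 1) => h (hj ▸ j.isLt)

theorem leftShift_pow_apply (k : ℕ) (v : Fin n → K) (i : Fin n) :
    (leftShift K n ^ k) v i = if h : (i : ℕ) + k < n then v ⟨i + k, h⟩ else 0 := by
  induction k generalizing i with
  | zero => simp
  | succ k ih =>
    rw [pow_succ', Module.End.mul_apply, leftShift_apply]
    simp only [ih, ← add_assoc, add_right_comm _ 1 k]
    split_ifs <;> first | rfl | omega

theorem isNilpotent_leftShift : IsNilpotent (leftShift K n) :=
  ⟨n, by ext v i; simp [leftShift_pow_apply]⟩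

theorem single_mem_range_leftShift_pow {k : ℕ} (i : Fin n) (hi : (i : ℕ) + k < n) :
    Pi.single i 1 ∈ LinearMap.range (leftShift K n ^ k) := by
  refine ⟨Pi.single ⟨i + k, hi⟩ 1, funext fun j => ?_⟩
  rw [leftShift_pow_apply]
  by_cases hj : j = i
  · simp [hj, hi]
  · have : (j : ℕ) ≠ i := Fin.val_ne_of_ne hj
    split_ifs <;> simp [hj, this]

theorem le_finrank_range_leftShift_pow [Nontrivial K] (k : ℕ) :
    n - k ≤ Module.finrank K (LinearMap.range (leftShift K n ^ k)) := by
  let e : Fin (n - k) → Fin n → K := fun i => Pi.single (Fin.castLE (Nat.sub_le n k) i) 1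
  have he : LinearIndependent K e := by
    simpa [e, Function.comp_def] using (Pi.basisFun K (Fin n)).linearIndependent.comp
      (Fin.castLE (Nat.sub_le n k)) (Fin.castLE_injective _)
  have hspan : Submodule.span K (Set.range e) ≤ LinearMap.range (leftShift K n ^ k) :=
    Submodule.span_le.mpr <| Set.range_subset_iff.mpr fun i =>
      single_mem_range_leftShift_pow _ (by rw [Fin.val_castLE]; omega)
  calc n - k = Module.finrank K (Submodule.span K (Set.range e)) := by
        rw [finrank_span_eq_card he, Fintype.card_fin]
    _ ≤ _ := Submodule.finrank_mono hspan

end LeftShift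

namespace Polynomial

theorem isUnit_aeval_of_isNilpotent {R A : Type*} [CommRing R] [Ring A] [Algebra R A]
    {t : A} (ht : IsNilpotent t) {f : R[X]} (hf : IsUnit (f.coeff 0)) : IsUnit (aeval t f) := by
  have hcomm : Commute t (aeval t f.divX) := by
    simpa using (commute_X f.divX).map (aeval t)
  have hnil : IsNilpotent (t * aeval t f.divX) := hcomm.isNilpotent_mul_right ht
  rw [← X_mul_divX_add f, map_add, map_mul, aeval_X, aeval_C]
  exact hnil.isUnit_add_right_of_commute (hf.map _) (Algebra.commutes _ _).symm

theorem range_aeval_eq_range_pow_natTrailingDegree {K M : Type*} [Field K]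
    [AddCommGroup M] [Module K M] {t : Module.End K M} (ht : IsNilpotent t) {f : K[X]}
    (hf : f ≠ 0) : LinearMap.range (aeval t f) = LinearMap.range (t ^ f.natTrailingDegree) := by
  obtain ⟨u, hu⟩ : X ^ f.natTrailingDegree ∣ f :=
    X_pow_dvd_iff.mpr fun _ => coeff_eq_zero_of_lt_natTrailingDegree
  have hu0 : u.coeff 0 ≠ 0 := by
    have := coeff_X_pow_mul u f.natTrailingDegree 0
    rw [zero_add, ← hu] at this
    rwa [← this, coeff_natTrailingDegree_ne_zero]
  have hunit : IsUnit (aeval t u) := isUnit_aeval_of_isNilpotent ht hu0.isUnit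
  conv_lhs => rw [hu, map_mul, map_pow, aeval_X, Module.End.mul_eq_comp, LinearMap.range_comp,
    LinearMap.range_eq_top.mpr ((Module.End.isUnit_iff _).mp hunit).surjective, Submodule.map_top]

variable {R : Type*} [CommRing R]

theorem coeff_one_add_X_sq_pow (m k : ℕ) :
    ((1 + X ^ 2 : R[X]) ^ m).coeff k = if 2 ∣ k then (m.choose (k / 2) : R) else 0 := by
  rw [← expand_X (R := R), ← map_one (expand R 2), ← map_add, ← map_pow,
    coeff_expand two_pos, coeff_one_add_X_pow]

theorem coeff_one_add_X_pow_mul_one_add_X_sq_pow_one (n m : ℕ) :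
    ((1 + X : R[X]) ^ n * (1 + X ^ 2) ^ m).coeff 1 = (n : R) := by
  simp [coeff_mul, Finset.Nat.antidiagonal_succ, coeff_one_add_X_sq_pow, coeff_one_add_X_pow]

end Polynomial

theorem jordan_block_rank_bound_general
    (p : ℕ) [Fact p.Prime] :
    let T : (Fin 5 → ZMod p) →ₗ[ZMod p] (Fin 5 → ZMod p) :=
      Matrix.toLin' (Matrix.of fun i j : Fin 5 => if (j : ℕ) = (i : ℕ) + 1 then 1 else 0)
    let R := 1 + T
    let S := 1 + T ^ 2
    ∀ l₁ l₂ : ZMod p, (l₁, l₂) ≠ (0, 0) →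
      3 ≤ Module.finrank (ZMod p)
        (LinearMap.range (R ^ l₁.val * S ^ l₂.val - 1)) := by
  intro T R S l₁ l₂ hl
  set f : (ZMod p)[X] := (1 + X) ^ l₁.val * (1 + X ^ 2) ^ l₂.val - 1
  have hf : R ^ l₁.val * S ^ l₂.val - 1 = aeval T f := by simp [f, R, S]
  obtain ⟨k, hk, hfk⟩ : ∃ k ≤ 2, f.coeff k ≠ 0 := by
    rcases eq_or_ne l₁ 0 with rfl | h₁
    · have h₂ : l₂ ≠ 0 := by rintro rfl; exact hl rfl
      exact ⟨2, le_rfl, by simpa [f, coeff_one, coeff_one_add_X_sq_pow] using h₂⟩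
    · exact ⟨1, by norm_num,
        by simpa [f, coeff_one, coeff_one_add_X_pow_mul_one_add_X_sq_pow_one] using h₁⟩
  have hf₀ : f ≠ 0 := fun h => hfk (by rw [h, coeff_zero])
  have hT : T = leftShift (ZMod p) 5 := rfl
  rw [hf, hT, range_aeval_eq_range_pow_natTrailingDegree isNilpotent_leftShift hf₀]
  have hd : f.natTrailingDegree ≤ 2 := (natTrailingDegree_le_of_ne_zero hfk).trans hk
  exact (by omega : 3 ≤ 5 - f.natTrailingDegree).trans (le_finrank_range_leftShift_pow _)

/-- Let `p ≥ 5` be prime, `A = (𝔽_p)⁵`, `T` the nilpotent single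
Jordan block (`T x₁ = 0`, `T xᵢ = x_{i−1}`), `R = 1 + T`, `S = 1 + T²`. Then for
every `(l₁, l₂) ≠ (0,0)` in `(ℤ/p)²`, the operator `R^{l₁} S^{l₂} − I` has rank at
least `3`. -/
theorem jordan_block_rank_bound
    (p : ℕ) [Fact p.Prime] (hp : 5 ≤ p) :
    let T : (Fin 5 → ZMod p) →ₗ[ZMod p] (Fin 5 → ZMod p) :=
      Matrix.toLin' (Matrix.of fun i j : Fin 5 => if (j : ℕ) = (i : ℕ) + 1 then 1 else 0)
    let R := 1 + T
    let S := 1 + T ^ 2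
    ∀ l₁ l₂ : ZMod p, (l₁, l₂) ≠ (0, 0) →
      3 ≤ Module.finrank (ZMod p)
        (LinearMap.range (R ^ l₁.val * S ^ l₂.val - 1)) :=
  jordan_block_rank_bound_general p
end
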